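/- arXiv:1911.12671 — 4 statements merged into one kernel-verified Lean document; each statement's English description precedes it below -/
import Mathlib

section
/- Let R be a commutative ring and a,b,c,d ∈ R. Then for every k ≥ 1 one has the matrix identity F_{k+1}(a,b)·F_k(c,d) = F_{k+1}(c,d)·F_k(a,b), and for every k ≥ 2 one has G_k(a,b)·G_{k+1}(c,d) = G_k(c,d)·G_{k+1}(a,b). (These are the relation families (1) and (2) of Theorem 3.12 — the commutation relations f_{u_j}f^λ_{u_i} = f_{u_i}f^λ_{u_j} and g_{u_j}g^λ_{u_i} = g_{u_i}g^λ_{u_j} — verified for the explicit matrices representing the f-type and g-type maps, as used in the proof of Theorem 4.2.) -/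
/-- The `(k+1) × k` matrix `F_k(a,b)` of equation (4.1): (1-indexed) entry `(i,j)` is
`a` if `i = j`, `b` if `i = j+1`, and `0` otherwise. -/
def Fmat (R : Type*) [CommRing R] (k : ℕ) (a b : R) : Matrix (Fin (k + 1)) (Fin k) R :=
  Matrix.of fun i j =>
    if (i : ℕ) = (j : ℕ) then a else if (i : ℕ) = (j : ℕ) + 1 then b else 0

/-- The `(k−1) × k` matrix `G_k(a,b)` of equation (4.2): (1-indexed) entry `(i,i)` is
`−(k−i)·b`, entry `(i,i+1)` is `i·a`, other entries are `0`. -/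
def Gmat (R : Type*) [CommRing R] (k : ℕ) (a b : R) : Matrix (Fin (k - 1)) (Fin k) R :=
  Matrix.of fun i j =>
    if (j : ℕ) = (i : ℕ) then -((k - 1 - (i : ℕ) : ℕ) : R) * b
    else if (j : ℕ) = (i : ℕ) + 1 then (((i : ℕ) + 1 : ℕ) : R) * a
    else 0

lemma helper1 {R : Type*} [CommRing R] {m n : ℕ} (hn : n + 1 < m) (f : Fin m → R) (c d : R) :
    (∑ l : Fin m, f l * (if (l : ℕ) = n then c else if (l : ℕ) = n + 1 then d else 0))
    = f ⟨n, by omega⟩ * c + f ⟨n + 1, hn⟩ * d := by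
  have h : ∀ l : Fin m,
      f l * (if (l : ℕ) = n then c else if (l : ℕ) = n + 1 then d else 0)
      = (if l = ⟨n, by omega⟩ then f l * c else 0) + (if l = ⟨n+1, hn⟩ then f l * d else 0) := by
    intro l
    rcases eq_or_ne (l : ℕ) n with h1 | h1 <;> rcases eq_or_ne (l : ℕ) (n+1) with h2 | h2 <;>
      simp_all [Fin.ext_iff]
  rw [Finset.sum_congr rfl (fun l _ => h l), Finset.sum_add_distrib]
  simp

lemma helper2 {R : Type*} [CommRing R] {m n : ℕ} (hn : n + 1 < m) (f : Fin m → R) (c d : R) :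
    (∑ l : Fin m, (if (l : ℕ) = n then c else if (l : ℕ) = n + 1 then d else 0) * f l)
    = c * f ⟨n, by omega⟩ + d * f ⟨n + 1, hn⟩ := by
  have := helper1 hn f c d
  simp only [mul_comm] at this ⊢
  convert this using 2

/-- Relation families (1) and (2) of Theorem 3.12 for the explicit matrices:
`F_{k+1}(a,b)·F_k(c,d) = F_{k+1}(c,d)·F_k(a,b)` for `k ≥ 1`, and
`G_k(a,b)·G_{k+1}(c,d) = G_k(c,d)·G_{k+1}(a,b)` for `k ≥ 2`. -/
theorem stmt2 {R : Type*} [CommRing R] (a b c d : R) :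
    (∀ k : ℕ, 1 ≤ k →
      Fmat R (k + 1) a b * Fmat R k c d = Fmat R (k + 1) c d * Fmat R k a b) ∧
    (∀ k : ℕ, 2 ≤ k →
      Gmat R k a b * (Gmat R (k + 1) c d).submatrix (Fin.cast (by omega : k = k + 1 - 1)) id =
        Gmat R k c d * (Gmat R (k + 1) a b).submatrix (Fin.cast (by omega : k = k + 1 - 1)) id) := by
  constructor
  · intro k _
    ext i j
    rw [Matrix.mul_apply, Matrix.mul_apply]
    simp only [Fmat, Matrix.of_apply]
    rw [helper1 (show (j : ℕ) + 1 < k + 1 by omega),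
        helper1 (show (j : ℕ) + 1 < k + 1 by omega)]
    simp only []
    split_ifs <;> first | (exfalso; omega) | ring
  · intro k hk
    ext i j
    have hi : (i : ℕ) < k - 1 := i.isLt
    rw [Matrix.mul_apply, Matrix.mul_apply]
    simp only [Gmat, Matrix.submatrix_apply, Fin.coe_cast, id, Matrix.of_apply]
    rw [helper2 (show (i : ℕ) + 1 < k by omega),
        helper2 (show (i : ℕ) + 1 < k by omega)]
    have h1 : k + 1 - 1 - (i : ℕ) = (k - 1 - (i : ℕ)) + 1 := by omega
    have h2 : k + 1 - 1 - ((i : ℕ) + 1) = k - 1 - (i : ℕ) := by omega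
    simp only [h1, h2]
    push_cast
    split_ifs <;> first | (exfalso; omega) | ring
end

section
/- Let R be a commutative ring, let k ≥ 2, and let a,b,c,d ∈ R. Then one has the matrix identity (k−1) • (G_{k+1}(c,d)·F_k(a,b)) = k • (F_{k−1}(a,b)·G_k(c,d)) − F_{k−1}(c,d)·G_k(a,b). (This is the relation family (4) of Theorem 3.12 — the square relation (λ₁−λ₂)·g_{u_j}f^λ_{u_i} = (λ₁−λ₂+1)·f_{u_i}g^λ_{u_j} − f_{u_j}g^λ_{u_i} with k−1 = λ₁−λ₂ — verified for the explicit matrices representing the f-type and g-type maps, as used in the proof of Theorem 4.2.) -/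
section

variable {R : Type*} [CommRing R]

lemma Fin.sum_univ_ite_val_eq {M : Type*} [AddCommMonoid M] (m t : ℕ) (f : Fin m → M) :
    (∑ x : Fin m, if (x : ℕ) = t then f x else 0) = if h : t < m then f ⟨t, h⟩ else 0 := by
  split_ifs with h
  · simpa [Fin.ext_iff] using Finset.sum_ite_eq' Finset.univ (⟨t, h⟩ : Fin m) f
  · exact Finset.sum_eq_zero fun x _ => if_neg (by omega)

lemma mul_Fmat_apply {ι : Type*} (m : ℕ) (a b : R) (M : Matrix ι (Fin (m + 1)) R) (i : ι)
    (j : Fin m) : (M * Fmat R m a b) i j = M i j.castSucc * a + M i j.succ * b := by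
  have hF : ∀ x, Fmat R m a b x j =
      (if x = j.castSucc then a else 0) + (if x = j.succ then b else 0) := by
    intro x
    simp only [Fmat, Matrix.of_apply, Fin.ext_iff, Fin.val_castSucc, Fin.val_succ]
    split_ifs <;> first | omega | simp
  simp [Matrix.mul_apply, hF, mul_add, Finset.sum_add_distrib]

lemma Fmat_mul_apply {ι : Type*} (m : ℕ) (a b : R) (N : Matrix (Fin m) ι R) (i : Fin (m + 1))
    (j : ι) : (Fmat R m a b * N) i j = (if h : (i : ℕ) < m then a * N ⟨i, h⟩ j else 0) +
      (if h : 0 < (i : ℕ) then b * N ⟨i - 1, by omega⟩ j else 0) := by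
  have hF : ∀ x : Fin m, Fmat R m a b i x * N x j =
      (if (x : ℕ) = i then a * N x j else 0) + (if (x : ℕ) + 1 = i then b * N x j else 0) := by
    intro x
    simp only [Fmat, Matrix.of_apply]
    split_ifs <;> first | omega | simp
  rw [Matrix.mul_apply, Finset.sum_congr rfl fun x _ => hF x, Finset.sum_add_distrib,
    Fin.sum_univ_ite_val_eq]
  congr 1
  split_ifs with hi
  · simp_rw [show ∀ x : ℕ, x + 1 = i ↔ x = i - 1 by omega, Fin.sum_univ_ite_val_eq,
      dif_pos (show (i : ℕ) - 1 < m by omega)]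
  · exact Finset.sum_eq_zero fun x _ => if_neg (by omega)

lemma Gmat_apply (k : ℕ) (a b : R) (i : Fin (k - 1)) (j : Fin k) :
    Gmat R k a b i j = if (j : ℕ) = i then -((k : R) - 1 - i) * b
      else if (j : ℕ) = i + 1 then ((i : R) + 1) * a else 0 := by
  have hi := i.isLt
  simp only [Gmat, Matrix.of_apply, Nat.cast_sub (show (i : ℕ) ≤ k - 1 by omega),
    Nat.cast_sub (show 1 ≤ k by omega)]
  push_cast
  rfl

lemma Gmat_mul_Fmat (k : ℕ) (hk : 1 ≤ k) (a b c d : R) :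
    (Gmat R (k + 1) c d).submatrix (Fin.cast (by omega : k = k + 1 - 1)) id * Fmat R k a b =
      (Fmat R (k - 1) a b * Gmat R k c d).submatrix (Fin.cast (by omega : k = k - 1 + 1)) id +
        (b * c - a * d) • 1 := by
  ext i j
  simp only [Matrix.add_apply, Matrix.smul_apply, Matrix.submatrix_apply, id, mul_Fmat_apply,
    Fmat_mul_apply, Gmat_apply, Fin.val_cast, Fin.val_castSucc, Fin.val_succ, Matrix.one_apply,
    Fin.ext_iff]
  -- writing `k = i + n + 1` and splitting off `i = 0` and `n = 0` (the first and last rows)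
  -- turns every truncated subtraction into a polynomial in `i` and `n`
  obtain ⟨n, hn⟩ : ∃ n, k = i + n + 1 := ⟨k - i - 1, by omega⟩
  have hj := j.isLt
  generalize (i : ℕ) = p at *
  generalize (j : ℕ) = q at *
  subst hn
  rcases p with _ | p <;> rcases n with _ | n <;>
    simp only [add_tsub_cancel_right, Nat.cast_add, Nat.cast_one] <;>
    split_ifs <;>
    first | omega | contradiction | (simp only [mul_one, mul_zero, add_zero, smul_eq_mul]; ring)

lemma Fmat_mul_Gmat_sub_Fmat_mul_Gmat (k : ℕ) (hk : 1 ≤ k) (a b c d : R) :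
    (Fmat R (k - 1) a b * Gmat R k c d).submatrix (Fin.cast (by omega : k = k - 1 + 1)) id -
      (Fmat R (k - 1) c d * Gmat R k a b).submatrix (Fin.cast (by omega : k = k - 1 + 1)) id =
        (((k : R) - 1) * (b * c - a * d)) • 1 := by
  ext i j
  simp only [Matrix.sub_apply, Matrix.smul_apply, Matrix.submatrix_apply, id, Fmat_mul_apply,
    Gmat_apply, Fin.val_cast, Matrix.one_apply, Fin.ext_iff]
  obtain ⟨n, hn⟩ : ∃ n, k = i + n + 1 := ⟨k - i - 1, by omega⟩
  generalize (i : ℕ) = p at *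
  generalize (j : ℕ) = q at *
  subst hn
  rcases p with _ | p <;> rcases n with _ | n <;>
    simp only [add_tsub_cancel_right, Nat.cast_add, Nat.cast_one] <;>
    split_ifs <;>
    first | omega | (simp only [mul_one, mul_zero, add_zero, smul_eq_mul]; ring)

end

/-- Relation family (4) of Theorem 3.12 for the explicit matrices: for `k ≥ 2`,
`(k−1) • (G_{k+1}(c,d)·F_k(a,b)) = k • (F_{k−1}(a,b)·G_k(c,d)) − F_{k−1}(c,d)·G_k(a,b)`
(the square relation with `k − 1 = λ₁ − λ₂`). -/
theorem stmt3 {R : Type*} [CommRing R] (k : ℕ) (hk : 2 ≤ k) (a b c d : R) :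
    (k - 1) • ((Gmat R (k + 1) c d).submatrix (Fin.cast (by omega : k = k + 1 - 1)) id
        * Fmat R k a b) =
      (k • (Fmat R (k - 1) a b * Gmat R k c d)
          - Fmat R (k - 1) c d * Gmat R k a b).submatrix
        (Fin.cast (by omega : k = k - 1 + 1)) id := by
  have hEuler := Fmat_mul_Gmat_sub_Fmat_mul_Gmat k (by omega) a b c d
  rw [Gmat_mul_Fmat k (by omega), Matrix.submatrix_sub, Pi.sub_apply, Pi.sub_apply,
    Matrix.submatrix_smul, Pi.smul_apply, Pi.smul_apply]
  obtain ⟨n, rfl⟩ : ∃ n, k = n + 1 := ⟨k - 1, by omega⟩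
  simp only [add_tsub_cancel_right, Nat.cast_add, Nat.cast_one, add_sub_cancel_right] at hEuler ⊢
  linear_combination (norm := module) -hEuler
end

section
/- Let 𝕜 be a field of characteristic zero and n ≥ 2. Let v₁,…,v_n ∈ 𝕜² with v₁ = (1,0) and v₂ = (0,1), writing v_i = (a_i, b_i). Suppose g₁,…,g_n ∈ 𝕜² (viewed as row vectors) satisfy ⟨g_i, v_j⟩ + ⟨g_j, v_i⟩ = 0 for all 1 ≤ i,j ≤ n, where ⟨·,·⟩ denotes the standard bilinear pairing on 𝕜². Then there exists a scalar c ∈ 𝕜 such that g_i = c·(−b_i, a_i) for all i. (This is Step 1 of the base case in the proof of Theorem 4.2: the antisymmetry relations g_{u_j}f^λ_{u_i} + g_{u_i}f^λ_{u_j} = 0 determine the 1×2 matrices G^{(1,0)}_i up to a common scalar.) -/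
/-- Step 1 of the base case in the proof of Theorem 4.2: over a field `𝕜` of characteristic
zero, if `v₁ = (1,0)`, `v₂ = (0,1)`, `v₃, …, v_n ∈ 𝕜²` and row vectors `g₁, …, g_n ∈ 𝕜²`
satisfy the antisymmetry relations `⟨g_i, v_j⟩ + ⟨g_j, v_i⟩ = 0` for all `i, j`, then there
is a scalar `c` with `g_i = c·(−b_i, a_i)` for all `i`, where `v_i = (a_i, b_i)`. -/
theorem stmt6 {𝕜 : Type*} [Field 𝕜] [CharZero 𝕜] (n : ℕ) (hn : 2 ≤ n)
    (v g : Fin n → 𝕜 × 𝕜)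
    (hv1 : v ⟨0, by omega⟩ = (1, 0)) (hv2 : v ⟨1, by omega⟩ = (0, 1))
    (h : ∀ i j : Fin n,
      ((g i).1 * (v j).1 + (g i).2 * (v j).2) +
        ((g j).1 * (v i).1 + (g j).2 * (v i).2) = 0) :
    ∃ c : 𝕜, ∀ i : Fin n, g i = (c * (-(v i).2), c * (v i).1) := by
  set i0 : Fin n := ⟨0, by omega⟩
  set i1 : Fin n := ⟨1, by omega⟩
  refine ⟨(g i0).2, fun i => ?_⟩
  have h00 := h i0 i0
  have h11 := h i1 i1
  have hi0 := h i i0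
  have hi1 := h i i1
  rw [hv1] at h00 hi0
  rw [hv2] at h11 hi1
  simp only at h00 h11 hi0 hi1
  have h01 := h i0 i1
  rw [hv1, hv2] at h01
  simp only at h01
  have hg1 : (g i).1 = (g i0).2 * (-(v i).2) := by
    linear_combination hi0 - (v i).1 / 2 * h00
  have hg2 : (g i).2 = (g i0).2 * (v i).1 := by
    linear_combination hi1 - (v i).1 * h01 - (v i).2 / 2 * h11
  exact Prod.ext hg1 hg2
end

section
/- Let λ = (λ₁, 0) and μ = (μ₁, μ₂) be partitions with at most two parts with λ ≤ μ, and set m₁ = μ₁ − λ₁ and m₂ = μ₂. Let γ be a partition with |γ| = m₁ + m₂. Then the number of Littlewood–Richardson tableaux of shape μ/λ and content γ equals 1 if γ has at most two parts, γ₂ ≤ min(m₁, m₂), and μ₂ ≤ λ₁ + γ₂; and it equals 0 otherwise. (This is the combinatorial content of Lemma 2.16 of the paper: the set Γ_{μ/λ} of contents γ with c^μ_{λ,γ} = 1 consists of the partitions (max{m₁,m₂}, min{m₁,m₂}), (max{m₁,m₂}+1, min{m₁,m₂}−1), …, down to second part equal to max{0, μ₂−λ₁}.) -/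
/-!
Reading the top row of a Littlewood–Richardson tableau of shape `(μ₁, μ₂)/(λ₁, 0)` from the
right, the lattice condition forces its last entry, hence (by weak increase) every entry, to be
`1`; after these `m₁` ones it forces the last entry of the second row to be at most `2`. So the
second row is `1^k 2^(μ₂-k)` and the reading word is `1^m₁ 2^(μ₂-k) 1^k`. This filling is a
tableau iff the columns above `λ₁` are strict, i.e. `k ≤ λ₁`; its word is a lattice word iff
`μ₂ - k ≤ m₁`; and its content is `(m₁ + k, μ₂ - k)`, which determines `k = μ₂ - γ₂`.
-/

/-- The cells of the two-row skew diagram `μ/λ` (rows indexed `0,1`, columns 0-indexed):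
cell `(i,j)` lies in row `i` with `λᵢ ≤ j < μᵢ`. -/
def Cell2 (la mu : ℕ × ℕ) (i j : ℕ) : Prop :=
  (i = 0 ∧ la.1 ≤ j ∧ j < mu.1) ∨ (i = 1 ∧ la.2 ≤ j ∧ j < mu.2)

/-- The reverse reading word of a filling `T` of the two-row skew shape `μ/λ`:
rows top to bottom, each row read right to left. -/
def word2 (la mu : ℕ × ℕ) (T : ℕ → ℕ → ℕ) : List ℕ :=
  ((List.range' la.1 (mu.1 - la.1)).map (T 0)).reverse ++
    ((List.range' la.2 (mu.2 - la.2)).map (T 1)).reverse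

/-- `T` is a semistandard skew tableau of shape `μ/λ`: positive entries, weakly
increasing along rows, strictly increasing down columns. -/
def IsSSYT2 (la mu : ℕ × ℕ) (T : ℕ → ℕ → ℕ) : Prop :=
  (∀ i j, Cell2 la mu i j → 1 ≤ T i j) ∧
  (∀ i j, Cell2 la mu i j → Cell2 la mu i (j + 1) → T i j ≤ T i (j + 1)) ∧
  (∀ j, Cell2 la mu 0 j → Cell2 la mu 1 j → T 0 j < T 1 j)

/-- A word is a lattice word if in every initial segment each `c+1` occurs no more often
than `c` (for positive `c`). -/
def IsLatticeWord (w : List ℕ) : Prop :=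
  ∀ n c, 1 ≤ c → (w.take n).count (c + 1) ≤ (w.take n).count c

/-- `T` is a Littlewood–Richardson tableau of shape `μ/λ` and content `γ`. -/
def IsLR2 (la mu : ℕ × ℕ) (γ : ℕ → ℕ) (T : ℕ → ℕ → ℕ) : Prop :=
  IsSSYT2 la mu T ∧ IsLatticeWord (word2 la mu T) ∧
    ∀ c, 1 ≤ c → (word2 la mu T).count c = γ c

lemma List.count_replicate_of_ne {α : Type*} [BEq α] [LawfulBEq α] {a b : α} {n : ℕ} (h : a ≠ b) :
    (List.replicate n b).count a = 0 := by
  simp [List.count_replicate, Ne.symm h]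

lemma List.map_range'_eq_replicate {α : Type*} {f : ℕ → α} {s n : ℕ} {a : α}
    (h : ∀ j, s ≤ j → j < s + n → f j = a) : (List.range' s n).map f = List.replicate n a := by
  refine List.eq_replicate_iff.2 ⟨by simp, ?_⟩
  simp only [List.mem_map, List.mem_range'_1]
  rintro _ ⟨j, hj, rfl⟩
  exact h j hj.1 hj.2

lemma List.reverse_map_range'_of_pos {α : Type*} (f : ℕ → α) {s n : ℕ} (hn : 0 < n) :
    ((List.range' s n).map f).reverse = f (s + n - 1) :: ((List.range' s (n - 1)).map f).reverse := by
  obtain ⟨n, rfl⟩ := Nat.exists_eq_add_of_lt hn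
  simp [List.range'_concat]

lemma IsLatticeWord.count_lt_of_append_cons {u w : List ℕ} {a : ℕ}
    (h : IsLatticeWord (u ++ a :: w)) (ha : 2 ≤ a) : u.count a < u.count (a - 1) := by
  have hprefix := h (u.length + 1) (a - 1) (by omega)
  rw [List.take_append, List.take_of_length_le (by omega), Nat.add_sub_cancel_left] at hprefix
  simpa [List.count_singleton, Nat.sub_add_cancel (by omega : 1 ≤ a),
    show a ≠ a - 1 by omega] using hprefix

lemma isLatticeWord_replicate_one_two_one_iff (a b c : ℕ) :
    IsLatticeWord (List.replicate a 1 ++ List.replicate b 2 ++ List.replicate c 1) ↔ b ≤ a := by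
  have hcount : ∀ n d, ((List.replicate a 1 ++ List.replicate b 2 ++ List.replicate c 1).take n).count d
      = (if d = 1 then min n a + min (n - a - b) c else 0) + (if d = 2 then min (n - a) b else 0) := by
    intro n d
    simp only [List.take_append, List.take_replicate, List.count_append, List.count_replicate,
      List.length_append, List.length_replicate, beq_iff_eq]
    split_ifs <;> omega
  constructor
  · intro h
    have := h (a + b) 1 le_rfl
    rw [hcount, hcount] at this
    simpa using this
  · intro _ n d _
    rw [hcount, hcount]
    split_ifs <;> omega

lemma content_replicate_one_two_one_iff (g : ℕ → ℕ) (a b c : ℕ) :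
    (∀ d, 1 ≤ d → (List.replicate a 1 ++ List.replicate b 2 ++ List.replicate c 1).count d = g d) ↔
      g 1 = a + c ∧ g 2 = b ∧ ∀ d, 3 ≤ d → g d = 0 := by
  simp only [List.count_append, List.count_replicate, beq_iff_eq]
  constructor
  · intro h
    refine ⟨?_, ?_, fun d hd => ?_⟩
    · simpa using (h 1 le_rfl).symm
    · simpa using (h 2 (by omega)).symm
    · have := h d (by omega)
      simpa [show 1 ≠ d by omega, show 2 ≠ d by omega] using this.symm
  · rintro ⟨h1, h2, h3⟩ d hd
    rcases (by omega : d = 1 ∨ d = 2 ∨ 3 ≤ d) with rfl | rfl | hd3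
    · simp [h1]
    · simp [h2]
    · simp [show 1 ≠ d by omega, show 2 ≠ d by omega, h3 d hd3]

lemma exists_threshold_of_monotone {f : ℕ → ℕ} {n : ℕ}
    (hmono : ∀ j j', j ≤ j' → j' < n → f j ≤ f j') (hval : ∀ j < n, 1 ≤ f j ∧ f j ≤ 2) :
    ∃ k ≤ n, ∀ j < n, f j = if j < k then 1 else 2 := by
  have hex : ∃ k, k = n ∨ f k = 2 := ⟨n, Or.inl rfl⟩
  refine ⟨Nat.find hex, Nat.find_min' hex (Or.inl rfl), fun j hj => ?_⟩
  split_ifs with hjk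
  · have := Nat.find_min hex hjk
    have := hval j hj
    omega
  · rcases Nat.find_spec hex with hk | hk
    · omega
    · have := hmono (Nat.find hex) j (by omega) hj
      have := hval j hj
      omega

lemma Cell2.of_le_of_le {la mu : ℕ × ℕ} {i j j' j'' : ℕ} (h : Cell2 la mu i j)
    (h' : Cell2 la mu i j'') (hj : j ≤ j') (hj' : j' ≤ j'') : Cell2 la mu i j' := by
  unfold Cell2 at *
  omega

lemma IsSSYT2.row_mono {la mu : ℕ × ℕ} {T : ℕ → ℕ → ℕ} (hT : IsSSYT2 la mu T) {i j j' : ℕ}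
    (hc : Cell2 la mu i j) (hc' : Cell2 la mu i j') (hj : j ≤ j') : T i j ≤ T i j' := by
  induction j', hj using Nat.le_induction with
  | base => rfl
  | succ j' hj ih =>
    have hmid : Cell2 la mu i j' := hc.of_le_of_le hc' hj (by omega)
    exact (ih hmid).trans (hT.2.1 i j' hmid hc')

lemma IsLR2.eq_one_of_cell_row_zero {la mu : ℕ × ℕ} {g : ℕ → ℕ} {T : ℕ → ℕ → ℕ}
    (hT : IsLR2 la mu g T) {j : ℕ} (hc : Cell2 la mu 0 j) : T 0 j = 1 := by
  have hlast : Cell2 la mu 0 (mu.1 - 1) := by unfold Cell2 at *; omega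
  have hle : T 0 (mu.1 - 1) ≤ 1 := by
    by_contra! h
    have hlat := hT.2.1
    rw [word2, List.reverse_map_range'_of_pos _ (by unfold Cell2 at hc; omega),
      show la.1 + (mu.1 - la.1) - 1 = mu.1 - 1 by unfold Cell2 at hc; omega, List.cons_append,
      ← List.nil_append (_ :: _)] at hlat
    simpa using hlat.count_lt_of_append_cons h
  have := hT.1.1 0 j hc
  have := hT.1.row_mono hc hlast (by unfold Cell2 at *; omega)
  omega

lemma IsLR2.le_two_of_cell_row_one {la mu : ℕ × ℕ} {g : ℕ → ℕ} {T : ℕ → ℕ → ℕ}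
    (hT : IsLR2 la mu g T) {j : ℕ} (hc : Cell2 la mu 1 j) : T 1 j ≤ 2 := by
  have hlast : Cell2 la mu 1 (mu.2 - 1) := by unfold Cell2 at *; omega
  have hle : T 1 (mu.2 - 1) ≤ 2 := by
    by_contra! h
    have hlat := hT.2.1
    rw [word2, List.map_range'_eq_replicate (a := 1)
        (fun j h₁ h₂ => hT.eq_one_of_cell_row_zero (Or.inl ⟨rfl, h₁, by omega⟩)),
      List.reverse_replicate, List.reverse_map_range'_of_pos _ (by unfold Cell2 at hc; omega),
      show la.2 + (mu.2 - la.2) - 1 = mu.2 - 1 by unfold Cell2 at hc; omega] at hlat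
    have := hlat.count_lt_of_append_cons (by omega)
    rw [List.count_replicate_of_ne (by omega), List.count_replicate_of_ne (by omega)] at this
    omega
  exact (hT.1.row_mono hc hlast (by unfold Cell2 at *; omega)).trans hle

lemma IsLR2.of_eq_on_cells {la mu : ℕ × ℕ} {g : ℕ → ℕ} {T T' : ℕ → ℕ → ℕ}
    (hT : IsLR2 la mu g T) (h : ∀ i j, Cell2 la mu i j → T i j = T' i j) : IsLR2 la mu g T' := by
  have hword : word2 la mu T = word2 la mu T' := by
    unfold word2
    congr 2 <;> refine List.map_congr_left fun j hj => h _ j ?_ <;>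
      rw [List.mem_range'_1] at hj <;> unfold Cell2 <;> omega
  obtain ⟨⟨hpos, hrow, hcol⟩, hlat, hcont⟩ := hT
  refine ⟨⟨fun i j hc => ?_, fun i j hc hc' => ?_, fun j hc hc' => ?_⟩, hword ▸ hlat, hword ▸ hcont⟩
  · exact h i j hc ▸ hpos i j hc
  · exact h i j hc ▸ h i (j + 1) hc' ▸ hrow i j hc hc'
  · exact h 0 j hc ▸ h 1 j hc' ▸ hcol j hc hc'

def lrTableau (l1 mu1 mu2 k : ℕ) (i j : ℕ) : ℕ :=
  if i = 0 ∧ l1 ≤ j ∧ j < mu1 then 1 else if i = 1 ∧ j < mu2 then (if j < k then 1 else 2) else 0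

section lrTableau

variable {l1 mu1 mu2 k : ℕ}

lemma lrTableau_eq_zero_of_not_cell {i j : ℕ} (h : ¬ Cell2 (l1, 0) (mu1, mu2) i j) :
    lrTableau l1 mu1 mu2 k i j = 0 := by
  unfold Cell2 at h
  simp only [lrTableau]
  split_ifs <;> omega

lemma word2_lrTableau (hk : k ≤ mu2) :
    word2 (l1, 0) (mu1, mu2) (lrTableau l1 mu1 mu2 k) =
      List.replicate (mu1 - l1) 1 ++ List.replicate (mu2 - k) 2 ++ List.replicate k 1 := by
  have hrow1 : List.range' 0 mu2 = List.range' 0 k ++ List.range' k (mu2 - k) := by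
    have := List.range'_append (s := 0) (m := k) (n := mu2 - k) (step := 1)
    simp only [zero_add, one_mul, Nat.add_sub_cancel' hk] at this
    exact this.symm
  rw [word2, Nat.sub_zero, hrow1, List.map_append,
    List.map_range'_eq_replicate (a := 1) fun j h₁ h₂ => by
      dsimp only at h₁ h₂
      simp [lrTableau, h₁, show j < mu1 by omega],
    List.map_range'_eq_replicate (a := 1) fun j _ h₂ => by
      simp [lrTableau, show j < mu2 by omega, show j < k by omega],
    List.map_range'_eq_replicate (a := 2) fun j h₁ h₂ => by
      simp [lrTableau, show j < mu2 by omega, show ¬ j < k by omega]]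
  simp

lemma isSSYT2_lrTableau_iff (hmu : mu2 ≤ mu1) (hk : k ≤ mu2) :
    IsSSYT2 (l1, 0) (mu1, mu2) (lrTableau l1 mu1 mu2 k) ↔ k ≤ l1 := by
  constructor
  · rintro ⟨-, -, hcol⟩
    by_contra! hlk
    have := hcol l1 (Or.inl ⟨rfl, le_rfl, by omega⟩) (Or.inr ⟨rfl, by simp, by omega⟩)
    simp [lrTableau, hlk, show l1 < mu1 by omega, show l1 < mu2 by omega] at this
  · intro hkl
    refine ⟨fun i j hc => ?_, fun i j hc hc' => ?_, fun j hc hc' => ?_⟩ <;>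
      unfold Cell2 at * <;> simp only [lrTableau]
    all_goals split_ifs <;> simp_all
    all_goals omega

lemma isLR2_lrTableau_iff (hmu : mu2 ≤ mu1) (hk : k ≤ mu2) (g : ℕ → ℕ) :
    IsLR2 (l1, 0) (mu1, mu2) g (lrTableau l1 mu1 mu2 k) ↔
      k ≤ l1 ∧ mu2 - k ≤ mu1 - l1 ∧ g 1 = mu1 - l1 + k ∧ g 2 = mu2 - k ∧
        ∀ d, 3 ≤ d → g d = 0 := by
  rw [IsLR2, isSSYT2_lrTableau_iff hmu hk, word2_lrTableau hk,
    isLatticeWord_replicate_one_two_one_iff, content_replicate_one_two_one_iff]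

end lrTableau

lemma IsLR2.exists_eq_lrTableau {l1 mu1 mu2 : ℕ} {g : ℕ → ℕ} {T : ℕ → ℕ → ℕ}
    (hT : IsLR2 (l1, 0) (mu1, mu2) g T) :
    ∃ k ≤ mu2, ∀ i j, Cell2 (l1, 0) (mu1, mu2) i j → T i j = lrTableau l1 mu1 mu2 k i j := by
  have hcell1 : ∀ {j}, j < mu2 → Cell2 (l1, 0) (mu1, mu2) 1 j := fun hj => Or.inr ⟨rfl, by simp, hj⟩
  obtain ⟨k, hk, hrow1⟩ := exists_threshold_of_monotone (f := T 1) (n := mu2)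
    (fun j j' hj hj' => hT.1.row_mono (hcell1 (by omega)) (hcell1 hj') hj)
    (fun j hj => ⟨hT.1.1 1 j (hcell1 hj), hT.le_two_of_cell_row_one (hcell1 hj)⟩)
  refine ⟨k, hk, fun i j hc => ?_⟩
  rcases hc with ⟨rfl, hj⟩ | ⟨rfl, hj⟩
  · simp [lrTableau, hj, hT.eq_one_of_cell_row_zero (Or.inl ⟨rfl, hj⟩)]
  · simp [lrTableau, hj.2, hrow1 j hj.2]

lemma Finsupp.sum_id_eq_one_add_two {γ : ℕ →₀ ℕ} (h0 : γ 0 = 0) (h3 : ∀ d, 3 ≤ d → γ d = 0) :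
    (γ.sum fun _ n => n) = γ 1 + γ 2 := by
  have hsupp : γ.support ⊆ Finset.range 3 := fun d hd => by
    by_contra hd3
    exact Finsupp.mem_support_iff.1 hd (h3 d (by simpa using hd3))
  rw [Finsupp.sum_of_support_subset γ hsupp _ fun _ _ => rfl]
  simp [Finset.sum_range_succ, h0]

theorem stmt10_general (l1 mu1 mu2 : ℕ) (hmu : mu2 ≤ mu1)
    (γ : ℕ →₀ ℕ) (hγ0 : γ 0 = 0)
    (hγsum : (γ.sum fun _ n => n) = (mu1 - l1) + mu2) :
    (((∀ c, 3 ≤ c → γ c = 0) ∧ γ 2 ≤ min (mu1 - l1) mu2 ∧ mu2 ≤ l1 + γ 2) →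
      ∃! T : ℕ → ℕ → ℕ,
        (∀ i j, ¬ Cell2 (l1, 0) (mu1, mu2) i j → T i j = 0) ∧
          IsLR2 (l1, 0) (mu1, mu2) (fun c => γ c) T) ∧
    (¬ ((∀ c, 3 ≤ c → γ c = 0) ∧ γ 2 ≤ min (mu1 - l1) mu2 ∧ mu2 ≤ l1 + γ 2) →
      ¬ ∃ T : ℕ → ℕ → ℕ, IsLR2 (l1, 0) (mu1, mu2) (fun c => γ c) T) := by
  have hclassify : ∀ T, IsLR2 (l1, 0) (mu1, mu2) (fun c => γ c) T → ∃ k ≤ mu2,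
      (∀ i j, Cell2 (l1, 0) (mu1, mu2) i j → T i j = lrTableau l1 mu1 mu2 k i j) ∧
        k ≤ l1 ∧ mu2 - k ≤ mu1 - l1 ∧ γ 2 = mu2 - k ∧ ∀ d, 3 ≤ d → γ d = 0 := by
    intro T hT
    obtain ⟨k, hk, hTk⟩ := hT.exists_eq_lrTableau
    obtain ⟨hkl, hm, -, h2, h3⟩ := (isLR2_lrTableau_iff hmu hk _).1 (hT.of_eq_on_cells hTk)
    exact ⟨k, hk, hTk, hkl, hm, h2, h3⟩
  refine ⟨fun ⟨h3, h2, hcol⟩ => ?_, fun hbad ⟨T, hT⟩ => ?_⟩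
  · have hsum := Finsupp.sum_id_eq_one_add_two hγ0 h3
    have hLR : IsLR2 (l1, 0) (mu1, mu2) (fun c => γ c) (lrTableau l1 mu1 mu2 (mu2 - γ 2)) :=
      (isLR2_lrTableau_iff hmu (Nat.sub_le _ _) _).2 ⟨by omega, by omega, by omega, by omega, h3⟩
    refine ⟨_, ⟨fun i j => lrTableau_eq_zero_of_not_cell, hLR⟩, fun T ⟨hT0, hT⟩ => ?_⟩
    obtain ⟨k, hk, hTk, -, -, hk2, -⟩ := hclassify T hT
    obtain rfl : k = mu2 - γ 2 := by omega
    funext i j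
    by_cases hc : Cell2 (l1, 0) (mu1, mu2) i j
    · exact hTk i j hc
    · rw [hT0 i j hc, lrTableau_eq_zero_of_not_cell hc]
  · obtain ⟨k, hk, -, hkl, hm, hk2, h3⟩ := hclassify T hT
    exact hbad ⟨h3, by omega, by omega⟩

/-- The combinatorial content of Lemma 2.16: for `λ = (λ₁, 0) ≤ μ = (μ₁, μ₂)` with
`m₁ = μ₁ − λ₁`, `m₂ = μ₂`, and a partition `γ` (encoded as a finitely supported content
function, `γ c` = number of entries equal to `c`) with `|γ| = m₁ + m₂`, the number of
Littlewood–Richardson tableaux of shape `μ/λ` and content `γ` is `1` if `γ` has at most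
two parts, `γ₂ ≤ min(m₁,m₂)` and `μ₂ ≤ λ₁ + γ₂`, and is `0` otherwise. -/
theorem stmt10 (l1 mu1 mu2 : ℕ) (hmu : mu2 ≤ mu1) (hl : l1 ≤ mu1)
    (γ : ℕ →₀ ℕ) (hγ0 : γ 0 = 0) (hγmono : ∀ c, 1 ≤ c → γ (c + 1) ≤ γ c)
    (hγsum : (γ.sum fun _ n => n) = (mu1 - l1) + mu2) :
    (((∀ c, 3 ≤ c → γ c = 0) ∧ γ 2 ≤ min (mu1 - l1) mu2 ∧ mu2 ≤ l1 + γ 2) →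
      ∃! T : ℕ → ℕ → ℕ,
        (∀ i j, ¬ Cell2 (l1, 0) (mu1, mu2) i j → T i j = 0) ∧
          IsLR2 (l1, 0) (mu1, mu2) (fun c => γ c) T) ∧
    (¬ ((∀ c, 3 ≤ c → γ c = 0) ∧ γ 2 ≤ min (mu1 - l1) mu2 ∧ mu2 ≤ l1 + γ 2) →
      ¬ ∃ T : ℕ → ℕ → ℕ, IsLR2 (l1, 0) (mu1, mu2) (fun c => γ c) T) :=
  stmt10_general l1 mu1 mu2 hmu γ hγ0 hγsum
end
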